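/- The number of bargraphs with exactly j H steps and exactly k U steps avoiding both factors DH and HH equals the number of binary words of length j+k over {U,H} with j letters H, ending in H, containing no HH, and starting with U; equivalently, the generating function of bargraphs avoiding DH and HH, with x marking H and y marking U, is xy/(1−y−xy). -/

import Mathlib

/-- Steps of bargraphs / Motzkin paths. -/
inductive Step where
  | U : Step
  | H : Step
  | D : Step
deriving DecidableEq

/-- Vertical displacement of a step. -/
def Step.val : Step → ℤ
  | .U => 1
  | .H => 0
  | .D => -1

/-- Mirror of a step (swap U and D). -/
def Step.mirror : Step → Step
  | .U => .D
  | .H => .H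
  | .D => .U

/-- Final height of a word. -/
def hgt (w : List Step) : ℤ := (w.map Step.val).sum

/-- A Motzkin path prefix: never goes below the x-axis. -/
def IsMotzkinPrefix (w : List Step) : Prop := ∀ p : List Step, p <+: w → 0 ≤ hgt p

/-- A Motzkin path: never below the x-axis, ends at height 0. -/
def IsMotzkin (w : List Step) : Prop := IsMotzkinPrefix w ∧ hgt w = 0

/-- No peak `UD` and no valley `DU`. -/
def Cornerless (w : List Step) : Prop :=
  ¬ [Step.U, Step.D] <:+: w ∧ ¬ [Step.D, Step.U] <:+: w

/-- A bargraph: starts at the origin, ends on the x-axis, stays strictly above the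
x-axis except at the endpoints, and has no factor `UD` or `DU`. -/
def IsBargraph (w : List Step) : Prop :=
  2 ≤ w.length ∧ hgt w = 0 ∧
    (∀ p : List Step, p <+: w → p ≠ [] → p ≠ w → 0 < hgt p) ∧ Cornerless w

/-- Semiperimeter: number of `U` steps plus number of `H` steps. -/
def semi (w : List Step) : ℕ := w.count Step.U + w.count Step.H

/-- Length of the initial run of `U` steps. -/
def leadU : List Step → ℕ
  | Step.U :: rest => leadU rest + 1
  | _ => 0

/-- Length of the initial run of `H` steps. -/
def leadH : List Step → ℕ
  | Step.H :: rest => leadH rest + 1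
  | _ => 0

/-- Length of the initial run of `D` steps. -/
def leadD : List Step → ℕ
  | Step.D :: rest => leadD rest + 1
  | _ => 0

/-- Length of the first maximal run of `D` steps (0 if none). -/
def firstDescLen : List Step → ℕ
  | [] => 0
  | Step.D :: rest => leadD rest + 1
  | _ :: rest => firstDescLen rest

/-- Number of occurrences of the two-letter factor `a b`. -/
def cnt2 (a b : Step) : List Step → ℕ
  | x :: y :: rest => (if x = a ∧ y = b then 1 else 0) + cnt2 a b (y :: rest)
  | _ => 0

/-- Heights of the columns (`H` steps), starting from a given height. -/
def colHeights : ℤ → List Step → List ℤ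
  | _, [] => []
  | h, Step.U :: rest => colHeights (h + 1) rest
  | h, Step.H :: rest => h :: colHeights h rest
  | h, Step.D :: rest => colHeights (h - 1) rest

/-- Width of the leftmost maximal horizontal segment (0 if none). -/
def lhsW : List Step → ℕ
  | [] => 0
  | Step.H :: rest => leadH rest + 1
  | _ :: rest => lhsW rest

/-- Delete `h` steps at the start of the leftmost horizontal segment. -/
def stripLeadH (h : ℕ) : List Step → List Step
  | [] => []
  | Step.H :: rest => List.drop h (Step.H :: rest)
  | s :: rest => s :: stripLeadH h rest

/-- Number of initial columns of height 1: largest `j` such that the word begins `U H^j`. -/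
def iuc : List Step → ℕ
  | Step.U :: rest => leadH rest
  | _ => 0

/-- Number of maximal horizontal segments. -/
def hsCount : List Step → ℕ
  | [] => 0
  | [Step.H] => 1
  | [_] => 0
  | a :: b :: rest => (if a = Step.H ∧ b ≠ Step.H then 1 else 0) + hsCount (b :: rest)

/-- Mirror image: reverse the word and swap `U` with `D`. -/
def mir (w : List Step) : List Step := (w.reverse).map Step.mirror

/-- Shape of strictly alternating bargraphs:
`U^{i₁} H D^{k₁} H U^{i₂} H D^{k₂} H ⋯ U^{iₘ} H D^{kₘ}` with all `iᵣ, kᵣ ≥ 1`. -/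
inductive SAShape : List Step → Prop where
  | base (i k : ℕ) : 1 ≤ i → 1 ≤ k →
      SAShape (List.replicate i Step.U ++ [Step.H] ++ List.replicate k Step.D)
  | cons (i k : ℕ) (w : List Step) : 1 ≤ i → 1 ≤ k → SAShape w →
      SAShape (List.replicate i Step.U ++ [Step.H] ++ List.replicate k Step.D ++ [Step.H] ++ w)

/-- A strictly alternating bargraph. -/
def IsStrictAlt (w : List Step) : Prop := IsBargraph w ∧ SAShape w

/-- A secondary structure on `{0, …, m-1}`: all consecutive edges are present, every
vertex has at most one non-consecutive neighbour, and there are no crossing edges. -/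
def IsSecondaryStructure {m : ℕ} (G : SimpleGraph (Fin m)) : Prop :=
  (∀ i j : Fin m, (i : ℕ) + 1 = (j : ℕ) → G.Adj i j) ∧
  (∀ i j k : Fin m, G.Adj i j → G.Adj i k →
      (i : ℕ) + 1 ≠ (j : ℕ) → (j : ℕ) + 1 ≠ (i : ℕ) →
      (i : ℕ) + 1 ≠ (k : ℕ) → (k : ℕ) + 1 ≠ (i : ℕ) → j = k) ∧
  ¬ ∃ i j k l : Fin m, (i : ℕ) < (j : ℕ) ∧ (j : ℕ) < (k : ℕ) ∧ (k : ℕ) < (l : ℕ) ∧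
      G.Adj i k ∧ G.Adj j l

/-- Generating function of bargraphs: `x` (variable 0) marks `H` steps,
`y` (variable 1) marks `U` steps. -/
noncomputable def BG : MvPowerSeries (Fin 2) ℚ :=
  fun d => (Nat.card {w : List Step //
    IsBargraph w ∧ w.count Step.H = d 0 ∧ w.count Step.U = d 1} : ℚ)

/-- Generating function of cornerless Motzkin paths. -/
noncomputable def MG : MvPowerSeries (Fin 2) ℚ :=
  fun d => (Nat.card {w : List Step //
    IsMotzkin w ∧ Cornerless w ∧ w.count Step.H = d 0 ∧ w.count Step.U = d 1} : ℚ)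

/-- Generating function of bargraphs avoiding the factor `DH`. -/
noncomputable def BDH : MvPowerSeries (Fin 2) ℚ :=
  fun d => (Nat.card {w : List Step //
    IsBargraph w ∧ ¬ [Step.D, Step.H] <:+: w ∧
      w.count Step.H = d 0 ∧ w.count Step.U = d 1} : ℚ)

/-- Generating function of bargraphs avoiding the factors `DH` and `HH`. -/
noncomputable def BDHHH : MvPowerSeries (Fin 2) ℚ :=
  fun d => (Nat.card {w : List Step //
    IsBargraph w ∧ ¬ [Step.D, Step.H] <:+: w ∧ ¬ [Step.H, Step.H] <:+: w ∧
      w.count Step.H = d 0 ∧ w.count Step.U = d 1} : ℚ)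

/-- Generating function of cornerless Motzkin path prefixes ending at height `h`. -/
noncomputable def Pgf (h : ℕ) : MvPowerSeries (Fin 2) ℚ :=
  fun d => (Nat.card {w : List Step //
    IsMotzkinPrefix w ∧ Cornerless w ∧ hgt w = (h : ℤ) ∧
      w.count Step.H = d 0 ∧ w.count Step.U = d 1} : ℚ)

/-- Decomposition `G = U^a G₁ H G₂ D^a` of a strictly alternating bargraph. -/
def SADecomp (t : ℕ × List Step × List Step) (G : List Step) : Prop :=
  1 ≤ t.1 ∧ IsStrictAlt t.2.1 ∧ IsStrictAlt (Step.U :: (t.2.2 ++ [Step.D])) ∧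
    G = List.replicate t.1 Step.U ++ t.2.1 ++ [Step.H] ++ t.2.2 ++
      List.replicate t.1 Step.D

/-!
Avoiding `DU` (a bargraph has no valleys) and `DH` means that every `D` is followed by another
`D`, so such a bargraph is a `D`-free word `w` followed by a single descent of length `#U(w)`.
The remaining bargraph conditions say exactly that `w` starts with `U` and ends with `H`, and
`HH` occurs in the bargraph iff it occurs in `w`; deleting the descent is the bijection.
A word counted by `a(j, k)` is `UH`, or `U` followed by a shorter such word, or `UH` followed by
one; hence `a(j, k) = a(j, k-1) + a(j-1, k-1) + [j = k = 1]`, which is the coefficient form of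
`(1 - y - xy) A = xy`.
-/

open List

instance : Fintype Step :=
  ⟨{.U, .H, .D}, fun x => by cases x <;> simp⟩

namespace List

variable {α : Type*}

theorem pair_infix_cons_iff {a b x : α} {l : List α} :
    [a, b] <:+: x :: l ↔ (x = a ∧ l.head? = some b) ∨ [a, b] <:+: l := by
  rw [infix_cons_iff, cons_prefix_cons, singleton_prefix_iff_head?_eq_some, eq_comm]

theorem pair_infix_append_iff {a b : α} {u v : List α} :
    [a, b] <:+: u ++ v ↔
      [a, b] <:+: u ∨ [a, b] <:+: v ∨ (u.getLast? = some a ∧ v.head? = some b) := by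
  rw [infix_append_iff_ne_nil, ← singleton_suffix_iff_getLast?_eq_some,
    ← singleton_prefix_iff_head?_eq_some]
  refine or_congr_right (or_congr_right ⟨?_, fun h => ⟨[a], [b], by simp, by simp, rfl, h⟩⟩)
  rintro ⟨_ | ⟨x, l₁⟩, l₂, h₁, h₂, he, hs, hp⟩
  · simp at h₁
  · obtain ⟨rfl, hl⟩ := cons_eq_cons.1 he
    obtain ⟨rfl, rfl⟩ : l₁ = [] ∧ l₂ = [b] := by
      rcases l₁ with _ | ⟨y, _ | ⟨z, l₁⟩⟩ <;> simp_all
    exact ⟨hs, hp⟩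

theorem pair_infix_of_pair_infix_append_replicate {a b c : α} {l : List α} {n : ℕ}
    (hb : b ≠ c) (h : [a, b] <:+: l ++ replicate n c) : [a, b] <:+: l := by
  rcases pair_infix_append_iff.1 h with h | h | ⟨-, h⟩
  · exact h
  · exact absurd (eq_of_mem_replicate (h.subset (by simp))) hb
  · exact absurd (eq_of_mem_replicate (mem_of_mem_head? h)) hb

theorem exists_eq_append_replicate_of_pair_infix {a : α} {l : List α}
    (h : ∀ b, [a, b] <:+: l → b = a) : ∃ u n, a ∉ u ∧ l = u ++ replicate n a := by
  induction l with
  | nil => exact ⟨[], 0, not_mem_nil, rfl⟩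
  | cons x l ih =>
    obtain ⟨u, n, hu, rfl⟩ := ih fun b hb => h b (hb.trans (infix_cons (infix_refl _)))
    by_cases hx : x = a
    · subst hx
      cases u with
      | nil => exact ⟨[], n + 1, not_mem_nil, rfl⟩
      | cons y u =>
        have := h y (pair_infix_cons_iff.2 (Or.inl ⟨rfl, rfl⟩))
        simp_all
    · exact ⟨x :: u, n, by simp [hu, Ne.symm hx], rfl⟩

theorem prefix_append_cases {p u v : List α} (h : p <+: u ++ v) :
    p <+: u ∨ ∃ q, q <+: v ∧ p = u ++ q := by
  rcases le_total p.length u.length with hl | hl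
  · exact Or.inl (prefix_of_prefix_length_le h (prefix_append u v) hl)
  · obtain ⟨q, rfl⟩ := prefix_of_prefix_length_le (prefix_append u v) h hl
    exact Or.inr ⟨q, (prefix_append_right_inj u).1 h, rfl⟩

end List

theorem hgt_eq_count_sub_count (w : List Step) :
    hgt w = w.count Step.U - w.count Step.D := by
  induction w with
  | nil => rfl
  | cons x w ih =>
    simp only [hgt, map_cons, sum_cons] at ih ⊢
    cases x <;>
      simp only [Step.val, ih, count_cons_self, count_cons_of_ne, ne_eq, reduceCtorEq,
        not_false_eq_true, Nat.cast_add, Nat.cast_one] <;> ring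

theorem length_eq_count_add_count_add_count (w : List Step) :
    w.length = w.count Step.U + w.count Step.H + w.count Step.D := by
  induction w with
  | nil => rfl
  | cons x w ih => cases x <;>
      simp only [length_cons, ih, count_cons_self, count_cons_of_ne, ne_eq, reduceCtorEq,
        not_false_eq_true] <;> omega

theorem IsBargraph.head?_eq_U {v : List Step} (hv : IsBargraph v) : v.head? = some Step.U := by
  obtain ⟨hlen, -, hpos, -⟩ := hv
  obtain ⟨x, t, rfl⟩ := exists_cons_of_length_pos (by omega : 0 < v.length)
  have hx := hpos [x] (by simp) (by simp) (by simp; rintro rfl; simp at hlen)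
  cases x <;> simp_all [hgt, Step.val]

def IsAscentWord (w : List Step) : Prop :=
  Step.D ∉ w ∧ w.head? = some Step.U ∧ w.getLast? = some Step.H

theorem IsAscentWord.one_le_count_U {w : List Step} (hw : IsAscentWord w) :
    1 ≤ w.count Step.U :=
  count_pos_iff.2 (mem_of_mem_head? hw.2.1)

theorem IsAscentWord.isBargraph_append_replicate {w : List Step} (hw : IsAscentWord w) :
    IsBargraph (w ++ replicate (w.count Step.U) Step.D) := by
  have hU := hw.one_le_count_U
  obtain ⟨hD, hhead, hlast⟩ := hw
  have hne : w ≠ [] := by rintro rfl; simp at hhead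
  refine ⟨?_, ?_, ?_, ?_, ?_⟩
  · have := length_pos_iff.2 hne
    simp only [length_append, length_replicate]
    omega
  · simp [hgt_eq_count_sub_count, count_eq_zero.2 hD, count_replicate]
  · intro p hp hp₀ hpv
    rcases prefix_append_cases hp with hpw | ⟨q, hq, rfl⟩
    · obtain ⟨x, p, rfl⟩ := exists_cons_of_ne_nil hp₀
      obtain rfl : x = Step.U := by
        obtain ⟨t, rfl⟩ := hpw
        simpa using hhead
      have : Step.D ∉ Step.U :: p := fun h => hD (hpw.subset h)
      simp [hgt_eq_count_sub_count, count_eq_zero.2 this]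
    · obtain ⟨hqk, hq⟩ := prefix_replicate_iff.1 hq
      have : q.length ≠ w.count Step.U := by rintro h; rw [hq, h] at hpv; exact hpv rfl
      rw [hq]
      simp only [hgt_eq_count_sub_count, count_append, count_replicate, beq_iff_eq, reduceCtorEq,
        ↓reduceIte, add_zero, count_eq_zero.2 hD, zero_add]
      omega
  · intro h
    rcases pair_infix_append_iff.1 h with h | h | ⟨h, -⟩
    · exact hD (h.subset (by simp))
    · simpa using h.subset (by simp : Step.U ∈ [Step.U, Step.D])
    · simp [hlast] at h
  · exact fun h => hD ((pair_infix_of_pair_infix_append_replicate (by simp) h).subset (by simp))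

theorem IsBargraph.exists_isAscentWord {v : List Step} (hv : IsBargraph v)
    (hDH : ¬ [Step.D, Step.H] <:+: v) :
    ∃ w, IsAscentWord w ∧ v = w ++ replicate (w.count Step.U) Step.D := by
  have hhead := hv.head?_eq_U
  obtain ⟨-, hgt₀, -, hUD, hDU⟩ := hv
  have hD_then_D : ∀ b, [Step.D, b] <:+: v → b = Step.D := by
    rintro (_ | _ | _) h
    exacts [absurd h hDU, absurd h hDH, rfl]
  obtain ⟨u, m, hD, rfl⟩ := exists_eq_append_replicate_of_pair_infix hD_then_D
  have hm : m = u.count Step.U := by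
    simp only [hgt_eq_count_sub_count, count_append, count_replicate, beq_iff_eq, reduceCtorEq,
      ↓reduceIte, add_zero, count_eq_zero.2 hD, zero_add] at hgt₀
    omega
  subst hm
  have hne : u ≠ [] := by
    rintro rfl
    simp at hhead
  refine ⟨u, ⟨hD, ?_, ?_⟩, rfl⟩
  · obtain ⟨x, u, rfl⟩ := exists_cons_of_ne_nil hne
    simpa using hhead
  · have hU : 0 < u.count Step.U := by
      obtain ⟨x, u, rfl⟩ := exists_cons_of_ne_nil hne
      simp_all
    rw [getLast?_eq_some_getLast hne]
    cases hx : u.getLast hne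
    · refine absurd (pair_infix_append_iff.2 (Or.inr (Or.inr ⟨?_, ?_⟩))) hUD
      · rw [getLast?_eq_some_getLast hne, hx]
      · rw [head?_replicate, if_neg hU.ne']
    · rfl
    · exact absurd (hx ▸ getLast_mem hne) hD

def ascentWords (j k : ℕ) : Set (List Step) :=
  {w | IsAscentWord w ∧ ¬ [Step.H, Step.H] <:+: w ∧ w.count Step.H = j ∧ w.count Step.U = k}

theorem cons_U_mem_ascentWords {j k : ℕ} {w : List Step} (hw : w ∈ ascentWords j k) :
    Step.U :: w ∈ ascentWords j (k + 1) := by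
  obtain ⟨⟨hD, hh, hl⟩, hHH, rfl, rfl⟩ := hw
  exact ⟨⟨by simp [hD], rfl, by simp [getLast?_cons, hl]⟩, by simp [pair_infix_cons_iff, hHH],
    by simp, by simp⟩

theorem cons_U_H_mem_ascentWords {j k : ℕ} {w : List Step} (hw : w ∈ ascentWords j k) :
    Step.U :: Step.H :: w ∈ ascentWords (j + 1) (k + 1) := by
  obtain ⟨⟨hD, hh, hl⟩, hHH, rfl, rfl⟩ := hw
  exact ⟨⟨by simp [hD], rfl, by simp [getLast?_cons, hl]⟩,
    by simp [pair_infix_cons_iff, hHH, hh], by simp, by simp⟩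

theorem U_H_mem_ascentWords : [Step.U, Step.H] ∈ ascentWords 1 1 :=
  ⟨⟨by simp, rfl, rfl⟩, by simp [pair_infix_cons_iff], rfl, rfl⟩

theorem mem_ascentWords_succ_succ {j k : ℕ} {w : List Step}
    (hw : w ∈ ascentWords (j + 1) (k + 1)) :
    (∃ t ∈ ascentWords (j + 1) k, w = Step.U :: t) ∨
      (∃ t ∈ ascentWords j k, w = Step.U :: Step.H :: t) ∨
      (w = [Step.U, Step.H] ∧ j = 0 ∧ k = 0) := by
  obtain ⟨⟨hD, hh, hl⟩, hHH, hj, hk⟩ := hw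
  rcases w with _ | ⟨x, t⟩
  · simp at hh
  obtain rfl : x = Step.U := by simpa using hh
  rcases t with _ | ⟨_ | _ | _, t⟩
  · simp at hl
  · refine Or.inl ⟨Step.U :: t, ⟨⟨by simp_all, rfl, ?_⟩, ?_, ?_, ?_⟩, rfl⟩
    · rwa [getLast?_cons_cons] at hl
    · exact fun h => hHH (h.trans (infix_cons (infix_refl _)))
    · simpa using hj
    · simpa using hk
  · rcases t with _ | ⟨_ | _ | _, t⟩
    · simp_all
    · refine Or.inr (Or.inl ⟨Step.U :: t, ⟨⟨by simp_all, rfl, ?_⟩, ?_, ?_, ?_⟩, rfl⟩)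
      · rwa [getLast?_cons_cons, getLast?_cons_cons] at hl
      · exact fun h => hHH ((h.trans (infix_cons (infix_refl _))).trans
          (infix_cons (infix_refl _)))
      · simpa using hj
      · simpa using hk
    · simp [pair_infix_cons_iff] at hHH
    · simp at hD
  · simp at hD

theorem ascentWords_succ_succ (j k : ℕ) :
    ascentWords (j + 1) (k + 1) =
      cons Step.U '' ascentWords (j + 1) k ∪
        (fun w => Step.U :: Step.H :: w) '' ascentWords j k ∪
        {w | w = [Step.U, Step.H] ∧ j = 0 ∧ k = 0} := by
  ext w
  constructor
  · intro hw
    rcases mem_ascentWords_succ_succ hw with ⟨t, ht, rfl⟩ | ⟨t, ht, rfl⟩ | h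
    · exact Or.inl (Or.inl ⟨t, ht, rfl⟩)
    · exact Or.inl (Or.inr ⟨t, ht, rfl⟩)
    · exact Or.inr h
  · rintro ((⟨t, ht, rfl⟩ | ⟨t, ht, rfl⟩) | ⟨rfl, rfl, rfl⟩)
    exacts [cons_U_mem_ascentWords ht, cons_U_H_mem_ascentWords ht, U_H_mem_ascentWords]

theorem ascentWords_finite (j k : ℕ) : (ascentWords j k).Finite := by
  refine (List.finite_length_eq Step (j + k)).subset ?_
  rintro w ⟨⟨hD, -⟩, -, rfl, rfl⟩
  have := length_eq_count_add_count_add_count w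
  simp only [Set.mem_ofPred_eq, count_eq_zero.2 hD] at this ⊢
  omega

theorem ncard_ascentWords_succ_succ (j k : ℕ) :
    (ascentWords (j + 1) (k + 1)).ncard =
      (ascentWords (j + 1) k).ncard + (ascentWords j k).ncard +
        if j = 0 ∧ k = 0 then 1 else 0 := by
  have hfinU := (ascentWords_finite (j + 1) k).image (cons Step.U)
  have hfinUH := (ascentWords_finite j k).image fun w => Step.U :: Step.H :: w
  have hfin₀ : {w | w = [Step.U, Step.H] ∧ j = 0 ∧ k = 0}.Finite :=
    (Set.finite_singleton _).subset fun w h => h.1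
  have hdisj : Disjoint (cons Step.U '' ascentWords (j + 1) k)
      ((fun w => Step.U :: Step.H :: w) '' ascentWords j k) := by
    refine Set.disjoint_left.2 ?_
    rintro _ ⟨t, ht, rfl⟩ ⟨t', -, h⟩
    cases h
    simpa using ht.1.2.1
  have hdisj₀ : Disjoint (cons Step.U '' ascentWords (j + 1) k ∪
      (fun w => Step.U :: Step.H :: w) '' ascentWords j k)
      {w | w = [Step.U, Step.H] ∧ j = 0 ∧ k = 0} := by
    refine Set.disjoint_left.2 ?_
    rintro _ (⟨t, ht, rfl⟩ | ⟨t, ht, rfl⟩) ⟨h, -⟩ <;> cases h <;> simpa using ht.1.2.1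
  rw [ascentWords_succ_succ, Set.ncard_union_eq hdisj₀ (hfinU.union hfinUH) hfin₀,
    Set.ncard_union_eq hdisj hfinU hfinUH, Set.ncard_image_of_injective _ cons_injective,
    Set.ncard_image_of_injective _ fun a b h => by simpa using h]
  split_ifs with h
  · obtain ⟨rfl, rfl⟩ := h
    simp
  · simp [h]

theorem ascentWords_zero_right (j : ℕ) : ascentWords j 0 = ∅ :=
  Set.eq_empty_of_forall_notMem fun _ ⟨hw, _, _, hk⟩ => by
    have := hw.one_le_count_U
    omega

theorem ascentWords_zero_left (k : ℕ) : ascentWords 0 k = ∅ :=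
  Set.eq_empty_of_forall_notMem fun _ ⟨⟨_, _, hl⟩, _, hj, _⟩ => by
    have := count_pos_iff.2 (mem_of_mem_getLast? hl)
    omega

theorem bargraphs_avoiding_DH_HH_eq_image (j k : ℕ) :
    {v : List Step | IsBargraph v ∧ ¬ [Step.D, Step.H] <:+: v ∧ ¬ [Step.H, Step.H] <:+: v ∧
        v.count Step.H = j ∧ v.count Step.U = k} =
      (· ++ replicate k Step.D) '' ascentWords j k := by
  ext v
  constructor
  · rintro ⟨hv, hDH, hHH, rfl, rfl⟩
    obtain ⟨w, hw, rfl⟩ := hv.exists_isAscentWord hDH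
    refine ⟨w, ⟨hw, fun h => hHH (h.trans (prefix_append _ _).isInfix), ?_, ?_⟩, ?_⟩ <;>
      simp [count_replicate]
  · rintro ⟨w, ⟨hw, hHH, rfl, rfl⟩, rfl⟩
    refine ⟨hw.isBargraph_append_replicate, fun h => hw.1 ?_,
      fun h => hHH (pair_infix_of_pair_infix_append_replicate (by simp) h), ?_, ?_⟩
    · exact (pair_infix_of_pair_infix_append_replicate (by simp) h).subset (by simp)
    all_goals simp [count_replicate]

theorem ascentWords_eq_setOf (j k : ℕ) :
    ascentWords j k = {w | (∀ s ∈ w, s = Step.U ∨ s = Step.H) ∧ w.length = j + k ∧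
      w.count Step.H = j ∧ w.getLast? = some Step.H ∧ ¬ [Step.H, Step.H] <:+: w ∧
      w.head? = some Step.U} := by
  ext w
  have hD : Step.D ∉ w ↔ ∀ s ∈ w, s = Step.U ∨ s = Step.H :=
    ⟨fun h s hs => by cases s <;> simp_all, fun h hD => by simpa using h _ hD⟩
  have hlen := length_eq_count_add_count_add_count w
  simp only [ascentWords, IsAscentWord, Set.mem_ofPred_eq, ← hD]
  constructor
  · rintro ⟨⟨hD, hh, hl⟩, hHH, rfl, rfl⟩
    exact ⟨hD, by simp [hlen, count_eq_zero.2 hD, add_comm], rfl, hl, hHH, hh⟩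
  · rintro ⟨hD, hlen', rfl, hl, hHH, hh⟩
    simp only [count_eq_zero.2 hD, add_zero] at hlen
    exact ⟨⟨hD, hh, hl⟩, hHH, rfl, by omega⟩

theorem card_bargraphs_avoiding_DH_HH (j k : ℕ) :
    Nat.card {v : List Step // IsBargraph v ∧ ¬ [Step.D, Step.H] <:+: v ∧
        ¬ [Step.H, Step.H] <:+: v ∧ v.count Step.H = j ∧ v.count Step.U = k} =
      (ascentWords j k).ncard := by
  rw [← Set.ncard_image_of_injective _ (append_left_injective _),
    ← bargraphs_avoiding_DH_HH_eq_image]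
  rfl

namespace MvPowerSeries

theorem coeff_X_mul {σ R : Type*} [CommSemiring R] [DecidableEq σ] (s : σ)
    (φ : MvPowerSeries σ R) (d : σ →₀ ℕ) :
    coeff d (X s * φ) = if 1 ≤ d s then coeff (d - Finsupp.single s 1) φ else 0 := by
  simp only [X_def, coeff_monomial_mul, Finsupp.single_le_iff, one_mul]

theorem one_sub_X_sub_X_mul_X_mul_eq {R : Type*} [CommRing R] (F : MvPowerSeries (Fin 2) R)
    (f : ℕ → ℕ → R) (hF : ∀ d, coeff d F = f (d 0) (d 1))
    (hf_zero_right : ∀ j, f j 0 = 0) (hf_zero_left : ∀ k, f 0 k = 0)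
    (hf : ∀ j k, f (j + 1) (k + 1) = f (j + 1) k + f j k + if j = 0 ∧ k = 0 then 1 else 0) :
    (1 - X 1 - X 0 * X 1) * F = X 0 * X 1 := by
  suffices F = X 0 * X 1 + X 1 * F + X 0 * (X 1 * F) by linear_combination this
  ext d
  rw [← mul_one (X 0 * X 1 : MvPowerSeries (Fin 2) R), mul_assoc]
  simp only [map_add, coeff_X_mul, coeff_one, hF, Finsupp.tsub_apply, Finsupp.single_apply,
    Fin.isValue, zero_ne_one, one_ne_zero, ↓reduceIte, tsub_zero, Finsupp.ext_iff,
    Finsupp.coe_zero, Pi.zero_apply, Fin.forall_fin_two]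
  rcases d 0 with _ | j <;> rcases d 1 with _ | k <;>
    simp only [hf_zero_left, hf_zero_right, hf, nonpos_iff_eq_zero, one_ne_zero, ↓reduceIte,
      le_add_iff_nonneg_left, zero_le, add_tsub_cancel_right, add_zero]
  ring

end MvPowerSeries

/-- bargraphs avoiding `DH` and `HH` with `j` `H`s and `k` `U`s are
equinumerous with words over `{U,H}` of length `j + k` with `j` letters `H`, ending
in `H`, with no `HH`, starting with `U`; equivalently, their generating function is
`xy/(1 − y − xy)`. -/
theorem increasing_bargraphs :
    (∀ j k : ℕ,
      Nat.card {w : List Step // IsBargraph w ∧ ¬ [Step.D, Step.H] <:+: w ∧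
          ¬ [Step.H, Step.H] <:+: w ∧ w.count Step.H = j ∧ w.count Step.U = k}
        = Nat.card {w : List Step // (∀ s ∈ w, s = Step.U ∨ s = Step.H) ∧
            w.length = j + k ∧ w.count Step.H = j ∧
            w.getLast? = some Step.H ∧ ¬ [Step.H, Step.H] <:+: w ∧
            w.head? = some Step.U}) ∧
    (1 - MvPowerSeries.X (1 : Fin 2)
        - MvPowerSeries.X (0 : Fin 2) * MvPowerSeries.X (1 : Fin 2)) * BDHHH
      = MvPowerSeries.X (0 : Fin 2) * MvPowerSeries.X (1 : Fin 2) := by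
  refine ⟨fun j k => by rw [card_bargraphs_avoiding_DH_HH, ascentWords_eq_setOf]; rfl, ?_⟩
  exact MvPowerSeries.one_sub_X_sub_X_mul_X_mul_eq _ (fun j k => ((ascentWords j k).ncard : ℚ))
    (fun d => congrArg Nat.cast (card_bargraphs_avoiding_DH_HH (d 0) (d 1)))
    (by simp [ascentWords_zero_right]) (by simp [ascentWords_zero_left])
    (fun j k => by exact_mod_cast ncard_ascentWords_succ_succ j k)
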